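/- Let θ_{i+1} ∈ [0, 1], and let εᵁ, εᴰ : (0,∞) → (0,1) be differentiable with εᵁ strictly decreasing (so (εᵁ)' < 0) and εᴰ strictly decreasing. Fix N > 0 and define θ(n) = (1 - εᵁ(n))(1 - εᴰ(N - n)) + εᵁ(n)·θ_{i+1} for n ∈ (0, N). If n* is an interior critical point of θ and εᵁ, εᴰ are identical functions (symmetric channel), then εᵁ(n*) ≥ εᴰ(N - n*), i.e., n* ≤ N - n*, i.e., n* ≤ N/2. -/
import Mathlib


open Set

theorem clarq_stage_ul_le_half
    (ε : ℝ → ℝ) (θnext N : ℝ) (hN : 0 < N)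
    (hθ : 0 ≤ θnext) (hθ1 : θnext ≤ 1)
    (hdiff : Differentiable ℝ ε)
    (hanti : StrictAntiOn ε (Ioi 0))
    (hconv : ConvexOn ℝ (Ioi 0) ε)
    (hmem : ∀ n ∈ Ioi (0 : ℝ), ε n ∈ Ioo (0 : ℝ) 1)
    (nstar : ℝ) (hnstar : nstar ∈ Ioo 0 N)
    (hcrit : deriv (fun n => (1 - ε n) * (1 - ε (N - n)) + ε n * θnext) nstar = 0) :
    nstar ≤ N / 2 := by
  by_contra hcon
  push_neg at hcon
  obtain ⟨hn0, hnN⟩ := hnstar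
  set m := N - nstar with hm
  have hm0 : 0 < m := by simp [hm]; linarith
  have hmn : m < nstar := by simp [hm]; linarith
  have hnI : nstar ∈ Ioi (0:ℝ) := hn0
  have hmI : m ∈ Ioi (0:ℝ) := hm0
  set A := deriv ε nstar with hA
  set B := deriv ε m with hB
  -- A < 0
  have hAneg : A < 0 := by
    have hs : A ≤ slope ε nstar (nstar + 1) :=
      hconv.deriv_le_slope hnI (by simp; linarith) (by linarith) (hdiff nstar)
    have hlt : ε (nstar + 1) < ε nstar :=
      hanti hnI (by simp; linarith) (by linarith)
    have : slope ε nstar (nstar + 1) < 0 := by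
      rw [slope_def_field]
      have : nstar + 1 - nstar = 1 := by ring
      rw [this]
      simp
      linarith
    linarith
  have hBA : B ≤ A := hconv.monotoneOn_deriv (fun x hx => hdiff x) hmI hnI hmn.le
  -- values
  have huv : ε nstar < ε m := hanti hmI hnI hmn
  obtain ⟨hu0, hu1⟩ := hmem nstar hnI
  obtain ⟨hv0, hv1⟩ := hmem m hmI
  -- compute the derivative
  have h1 : HasDerivAt (fun n => ε (N - n)) (B * (0 - 1)) nstar := by
    have hg : HasDerivAt (fun n : ℝ => N - n) (0 - 1) nstar :=
      (hasDerivAt_const nstar N).sub (hasDerivAt_id nstar)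
    exact HasDerivAt.comp nstar (hdiff (N - nstar)).hasDerivAt hg
  have h2 : HasDerivAt ε A nstar := (hdiff nstar).hasDerivAt
  have hf : HasDerivAt (fun n => (1 - ε n) * (1 - ε (N - n)) + ε n * θnext)
      ((0 - A) * (1 - ε m) + (1 - ε nstar) * (0 - B * (0 - 1)) + A * θnext) nstar := by
    exact (((hasDerivAt_const nstar (1:ℝ)).sub h2).mul
      ((hasDerivAt_const nstar (1:ℝ)).sub h1)).add (h2.mul_const θnext)
  have heq : (0 - A) * (1 - ε m) + (1 - ε nstar) * (0 - B * (0 - 1)) + A * θnext = 0 := by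
    rw [← hf.deriv]; exact hcrit
  nlinarith [mul_pos (sub_pos.mpr hu1) (neg_pos.mpr hAneg),
    mul_le_mul_of_nonneg_left hBA (le_of_lt (sub_pos.mpr hu1)),
    mul_neg_of_neg_of_pos hAneg (by linarith : (0:ℝ) < θnext + ε m - ε nstar)]
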